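/- (The masked bit is hidden from any small model, with subsampled key.) Let α, n, r ∈ ℕ and η ≥ 0. Let samp: {0,1}^r → (size-n subsets of {1,…,α}) be a function such that for every distribution X on {0,1}^α with H_∞(X) ≥ α/4 there exists a distribution Y on {0,1}ⁿ with H_∞(Y) ≥ n/5 and SD((u, X|_{samp(u)}), (u, Y)) ≤ η, where u is uniform on {0,1}^r. Let s be uniformly distributed on {0,1}^α and let Z be any random variable jointly distributed with s whose support has size at most 2^{α/2}. Let u be uniform on {0,1}^r and v uniform on {0,1}ⁿ, with u and v independent of each other and of (s, Z). Then with probability at least 1 − 2^{−α/4} over z ← Z, the statistical distance between the conditional distribution of (u, v, ⟨v, s|_{samp(u)}⟩) given Z = z (inner product over 𝔽₂) and the distribution (u, v, U) with U a uniform independent bit is at most η + 2^{−n/10}. -/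

import Mathlib

/-!
Points `z` of `Z`-mass below `T = 2^(-3α/4)` carry total mass at most `2^(α/2) · T = 2^(-α/4)`.
Conditioning the uniform key on any other value `z` raises no probability above `2^(-α) / T`,
so the key keeps min-entropy `α/4` and the sampler hypothesis yields `Y` with `H_∞(Y) ≥ n/5` and
`SD((u, s|_{samp u}), (u, Y)) ≤ η`. Appending `(v, ⟨v, ·⟩)` with `v` uniform is a Markov kernel,
so it does not increase this distance, and by the leftover hash lemma for the inner product
(Parseval and Cauchy–Schwarz) `(u, v, ⟨v, Y⟩)` is within `√(max Y) / 2 ≤ 2^(-n/10)` of uniform.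
-/

open Finset

/-- Statistical distance between two (mass functions of) distributions on a finite set. -/
noncomputable def SD {Ω : Type*} [Fintype Ω] (p q : Ω → ℝ) : ℝ :=
  (∑ ω, |p ω - q ω|) / 2

/-- Min-entropy of a distribution on a finite set: `-log₂ (max_ω p ω)`. -/
noncomputable def minEntropy {Ω : Type*} [Fintype Ω] (p : Ω → ℝ) : ℝ :=
  - Real.logb 2 (⨆ ω, p ω)

/-- Marginal of the second component of a joint distribution. -/
noncomputable def margZ {A B : Type*} [Fintype A] (p : A × B → ℝ) : B → ℝ :=
  fun b => ∑ a, p (a, b)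

/-- Inner product over 𝔽₂. -/
def ip {N : ℕ} (x y : Fin N → ZMod 2) : ZMod 2 := ∑ i, x i * y i

/-- Restriction `x|_S` of a string `x ∈ {0,1}^N` to a subset `S` of size `t`, listing the
coordinates of `S` in increasing order. -/
def restrict {N t : ℕ} (x : Fin N → ZMod 2) (S : Finset (Fin N)) (h : S.card = t) :
    Fin t → ZMod 2 :=
  fun j => x ((S.orderIsoOfFin h j : Fin N))


section StatisticalDistance

variable {Ω Ω' : Type*} [Fintype Ω] [Fintype Ω']

lemma SD_triangle (p q e : Ω → ℝ) : SD p q ≤ SD p e + SD e q := by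
  unfold SD
  rw [← add_div, ← sum_add_distrib]
  gcongr with ω
  exact abs_sub_le _ _ _

lemma SD_comp_le (p q : Ω → ℝ) (K : Ω → Ω' → ℝ) (hK0 : ∀ ω ω', 0 ≤ K ω ω')
    (hK1 : ∀ ω, ∑ ω', K ω ω' = 1) :
    SD (fun ω' => ∑ ω, p ω * K ω ω') (fun ω' => ∑ ω, q ω * K ω ω') ≤ SD p q := by
  unfold SD
  gcongr ?_ / 2
  calc ∑ ω', |∑ ω, p ω * K ω ω' - ∑ ω, q ω * K ω ω'|
      = ∑ ω', |∑ ω, (p ω - q ω) * K ω ω'| := by simp only [sub_mul, sum_sub_distrib]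
    _ ≤ ∑ ω', ∑ ω, |p ω - q ω| * K ω ω' := by
        gcongr with ω'
        refine (abs_sum_le_sum_abs _ _).trans_eq (sum_congr rfl fun ω _ => ?_)
        rw [abs_mul, abs_of_nonneg (hK0 ω ω')]
    _ = ∑ ω, |p ω - q ω| := by
        rw [sum_comm]
        simp only [← mul_sum, hK1, mul_one]

end StatisticalDistance

section MinEntropy

variable {Ω : Type*} [Fintype Ω]

lemma exists_pos_of_sum_eq_one {X : Ω → ℝ} (hX1 : ∑ x, X x = 1) : ∃ x, 0 < X x := by
  by_contra! h
  linarith [sum_nonpos fun x (_ : x ∈ univ) => h x]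

lemma minEntropy_le_iff {X : Ω → ℝ} (hX1 : ∑ x, X x = 1) {c : ℝ} :
    c ≤ minEntropy X ↔ ∀ x, X x ≤ (2 : ℝ) ^ (-c) := by
  obtain ⟨x₀, hx₀⟩ := exists_pos_of_sum_eq_one hX1
  have hsup : 0 < ⨆ x, X x := hx₀.trans_le (le_ciSup (Finite.bddAbove_range X) x₀)
  have : Nonempty Ω := ⟨x₀⟩
  rw [minEntropy, le_neg, Real.logb_le_iff_le_rpow one_lt_two hsup, ciSup_le_iff
    (Finite.bddAbove_range X)]

end MinEntropy

lemma one_sub_mul_le_sum_filter_le {B : Type*} [Fintype B] (m : B → ℝ) (hm1 : ∑ b, m b = 1)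
    {K T : ℝ} (hT : 0 ≤ T) (hK : ((univ.filter fun b => m b ≠ 0).card : ℝ) ≤ K) :
    1 - K * T ≤ ∑ b ∈ univ.filter (fun b => T ≤ m b), m b := by
  have hlight : ∑ b ∈ univ.filter (fun b => ¬ T ≤ m b), m b ≤ K * T :=
    calc ∑ b ∈ univ.filter (fun b => ¬ T ≤ m b), m b
        ≤ ∑ b ∈ univ.filter (fun b => m b ≠ 0), T := by
          rw [sum_filter, sum_filter]
          gcongr with b
          split_ifs <;> grind
      _ ≤ K * T := by rw [sum_const, nsmul_eq_mul]; gcongr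
  linarith [sum_filter_add_sum_filter_not univ (fun b => T ≤ m b) m]

section InnerProductBit

variable {n : ℕ}

lemma ZMod.two_eq_zero_or_one (a : ZMod 2) : a = 0 ∨ a = 1 := by
  revert a; decide

noncomputable def signChar (b : ZMod 2) : ℝ := if b = 0 then 1 else -1

lemma signChar_add (a b : ZMod 2) : signChar (a + b) = signChar a * signChar b := by
  rcases a.two_eq_zero_or_one with rfl | rfl <;> rcases b.two_eq_zero_or_one with rfl | rfl <;>
    simp +decide [signChar]

lemma signChar_sum {ι : Type*} (s : Finset ι) (f : ι → ZMod 2) :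
    signChar (∑ i ∈ s, f i) = ∏ i ∈ s, signChar (f i) := by
  induction s using Finset.cons_induction with
  | empty => simp [signChar]
  | cons a s ha ih => rw [sum_cons, prod_cons, signChar_add, ih]

lemma abs_signChar (b : ZMod 2) : |signChar b| = 1 := by
  rcases b.two_eq_zero_or_one with rfl | rfl <;> simp +decide [signChar]

lemma ite_eq_one_add_signChar (a b : ZMod 2) :
    (if a = b then (1 : ℝ) else 0) = (1 + signChar (a + b)) / 2 := by
  rcases a.two_eq_zero_or_one with rfl | rfl <;> rcases b.two_eq_zero_or_one with rfl | rfl <;>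
    simp +decide [signChar]

lemma ip_add_right (v y y' : Fin n → ZMod 2) : ip v (y + y') = ip v y + ip v y' := by
  simp only [ip, Pi.add_apply, mul_add, sum_add_distrib]

lemma sum_signChar_ip (w : Fin n → ZMod 2) :
    ∑ v : Fin n → ZMod 2, signChar (ip v w) = if w = 0 then (2 : ℝ) ^ n else 0 := by
  have hcoord (c : ZMod 2) : ∑ b : ZMod 2, signChar (b * c) = if c = 0 then 2 else 0 := by
    rw [show (univ : Finset (ZMod 2)) = {0, 1} by decide, sum_pair zero_ne_one]
    rcases c.two_eq_zero_or_one with rfl | rfl <;> norm_num +decide [signChar]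
  simp only [ip, signChar_sum]
  rw [← Fintype.piFinset_univ, ← prod_univ_sum (fun _ => univ) fun i b => signChar (b * w i)]
  simp only [hcoord]
  split_ifs with hw
  · simp [hw]
  · obtain ⟨i, hi⟩ : ∃ i, w i ≠ 0 := by simpa [funext_iff] using hw
    exact prod_eq_zero (mem_univ i) (if_neg hi)

noncomputable def bias (Y : (Fin n → ZMod 2) → ℝ) (v : Fin n → ZMod 2) : ℝ :=
  ∑ y, Y y * signChar (ip v y)

lemma sum_bias_sq (Y : (Fin n → ZMod 2) → ℝ) :
    ∑ v, bias Y v ^ 2 = 2 ^ n * ∑ y, Y y ^ 2 := by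
  have hdiag (y y' : Fin n → ZMod 2) : y + y' = 0 ↔ y = y' := by
    simp [funext_iff, CharTwo.add_eq_zero]
  calc ∑ v, bias Y v ^ 2
      = ∑ v, ∑ y, ∑ y', Y y * Y y' * signChar (ip v (y + y')) := by
        simp only [bias, sq, sum_mul_sum, ip_add_right, signChar_add, mul_mul_mul_comm]
    _ = ∑ y, ∑ y', Y y * Y y' * ∑ v, signChar (ip v (y + y')) := by
        rw [sum_comm]; simp only [mul_sum]; exact sum_congr rfl fun y _ => sum_comm
    _ = ∑ y, Y y * Y y * 2 ^ n := by
        simp only [sum_signChar_ip, hdiag, mul_ite, mul_zero, sum_ite_eq, mem_univ, if_true]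
    _ = 2 ^ n * ∑ y, Y y ^ 2 := by
        rw [mul_sum]; exact sum_congr rfl fun y _ => by ring

lemma sum_ite_ip_sub_half {Y : (Fin n → ZMod 2) → ℝ} (hY1 : ∑ y, Y y = 1)
    (v : Fin n → ZMod 2) (b : ZMod 2) :
    ∑ y, Y y * (if ip v y = b then 1 else 0) - 1 / 2 = signChar b * bias Y v / 2 := by
  have hsplit : ∑ y, Y y * (if ip v y = b then 1 else 0)
      = (∑ y, Y y) / 2 + signChar b * bias Y v / 2 := by
    rw [bias, mul_sum, sum_div, sum_div, ← sum_add_distrib]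
    refine sum_congr rfl fun y _ => ?_
    rw [ite_eq_one_add_signChar, signChar_add]
    ring
  rw [hsplit, hY1]
  ring

lemma sum_abs_sum_ite_ip_sub_half {Y : (Fin n → ZMod 2) → ℝ} (hY1 : ∑ y, Y y = 1)
    (v : Fin n → ZMod 2) :
    ∑ b : ZMod 2, |∑ y, Y y * (if ip v y = b then 1 else 0) - 1 / 2| = |bias Y v| := by
  simp only [sum_ite_ip_sub_half hY1, abs_div, abs_mul, abs_signChar, abs_two, one_mul,
    sum_const, card_univ, ZMod.card, nsmul_eq_mul]
  ring

-- Leftover hash lemma for the inner-product extractor: Cauchy–Schwarz, then Parseval.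
lemma sum_abs_bias_le {Y : (Fin n → ZMod 2) → ℝ} (hY0 : ∀ y, 0 ≤ Y y) (hY1 : ∑ y, Y y = 1)
    {M : ℝ} (hM : ∀ y, Y y ≤ M) :
    ∑ v, |bias Y v| ≤ 2 ^ n * √M := by
  have hcard : (#(univ : Finset (Fin n → ZMod 2)) : ℝ) = 2 ^ n := by simp
  have hcollision : ∑ y, Y y ^ 2 ≤ M :=
    calc ∑ y, Y y ^ 2 ≤ ∑ y, M * Y y := by
          gcongr with y; rw [sq]; exact mul_le_mul_of_nonneg_right (hM y) (hY0 y)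
      _ = M := by rw [← mul_sum, hY1, mul_one]
  have hM0 : 0 ≤ M := (hY0 0).trans (hM 0)
  rw [← Real.sqrt_sq (by positivity : (0 : ℝ) ≤ 2 ^ n), ← Real.sqrt_mul (by positivity)]
  apply Real.le_sqrt_of_sq_le
  calc (∑ v, |bias Y v|) ^ 2 ≤ 2 ^ n * ∑ v, bias Y v ^ 2 := by
        simpa only [hcard, sq_abs] using
          sq_sum_le_card_mul_sum_sq (s := univ) (f := fun v => |bias Y v|)
    _ = 2 ^ n * (2 ^ n * ∑ y, Y y ^ 2) := by rw [sum_bias_sq]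
    _ ≤ (2 ^ n) ^ 2 * M := by rw [sq, mul_assoc]; gcongr

end InnerProductBit

section AppendInnerProduct

variable {U : Type*} [DecidableEq U] {n : ℕ}

noncomputable def appendIpKernel (uy : U × (Fin n → ZMod 2))
    (uvb : U × (Fin n → ZMod 2) × ZMod 2) : ℝ :=
  if uvb.1 = uy.1 then (if ip uvb.2.1 uy.2 = uvb.2.2 then 1 / 2 ^ n else 0) else 0

lemma appendIpKernel_nonneg (uy : U × (Fin n → ZMod 2)) (uvb : U × (Fin n → ZMod 2) × ZMod 2) :
    0 ≤ appendIpKernel uy uvb := by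
  unfold appendIpKernel; split_ifs <;> positivity

lemma sum_appendIpKernel [Fintype U] (uy : U × (Fin n → ZMod 2)) :
    ∑ uvb, appendIpKernel uy uvb = 1 := by
  simp [appendIpKernel, Fintype.sum_prod_type, sum_ite_eq']

lemma sum_mul_appendIpKernel [Fintype U] (f : U → (Fin n → ZMod 2) → ℝ) (u : U)
    (v : Fin n → ZMod 2) (b : ZMod 2) :
    ∑ uy : U × (Fin n → ZMod 2), f uy.1 uy.2 * appendIpKernel uy (u, v, b)
      = 1 / 2 ^ n * ∑ y, f u y * (if ip v y = b then 1 else 0) := by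
  rw [Fintype.sum_prod_type, Fintype.sum_eq_single u fun u' hu' => by
    simp [appendIpKernel, Ne.symm hu'], mul_sum]
  refine sum_congr rfl fun y _ => ?_
  simp only [appendIpKernel, if_true]
  split_ifs <;> ring

lemma sum_sum_ite_mul {A V : Type*} [Fintype A] [Fintype V] [DecidableEq V] (X : A → ℝ)
    (F : A → V) (g : V → ℝ) :
    ∑ y, (∑ a, if F a = y then X a else 0) * g y = ∑ a, X a * g (F a) := by
  simp only [sum_mul, ite_mul, zero_mul]
  rw [sum_comm]
  simp only [sum_ite_eq, mem_univ, if_true]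

lemma SD_append_ip_le [Fintype U] {A : Type*} [Fintype A] (c : ℝ) (X : A → ℝ)
    (Y : (Fin n → ZMod 2) → ℝ) (F : U → A → Fin n → ZMod 2) :
    SD (fun w : U × (Fin n → ZMod 2) × ZMod 2 =>
          c * (1 / 2 ^ n) * ∑ a, X a * (if ip w.2.1 (F w.1 a) = w.2.2 then 1 else 0))
        (fun w => c * (1 / 2 ^ n) * ∑ y, Y y * (if ip w.2.1 y = w.2.2 then 1 else 0))
      ≤ SD (fun uy : U × (Fin n → ZMod 2) => c * ∑ a, if F uy.1 a = uy.2 then X a else 0)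
          (fun uy => c * Y uy.2) := by
  convert SD_comp_le
    (fun uy : U × (Fin n → ZMod 2) => c * ∑ a, if F uy.1 a = uy.2 then X a else 0)
    (fun uy => c * Y uy.2) appendIpKernel appendIpKernel_nonneg sum_appendIpKernel using 2 <;>
    funext ⟨u, v, b⟩
  · rw [sum_mul_appendIpKernel (fun u y => c * ∑ a, if F u a = y then X a else 0)]
    have hfiber := sum_sum_ite_mul X (F u) fun y => if ip v y = b then (1 : ℝ) else 0
    simp only [mul_assoc, ← mul_sum, hfiber]
    ring
  · rw [sum_mul_appendIpKernel (fun _ y => c * Y y)]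
    simp only [mul_assoc, ← mul_sum]
    ring

lemma SD_ip_uniform_le {r : ℕ} {Y : (Fin n → ZMod 2) → ℝ} (hY0 : ∀ y, 0 ≤ Y y)
    (hY1 : ∑ y, Y y = 1) {M : ℝ} (hM : ∀ y, Y y ≤ M) :
    SD (fun w : (Fin r → ZMod 2) × (Fin n → ZMod 2) × ZMod 2 =>
          1 / 2 ^ r * (1 / 2 ^ n) * ∑ y, Y y * (if ip w.2.1 y = w.2.2 then 1 else 0))
        (fun _ => 1 / 2 ^ r * (1 / 2 ^ n) * (1 / 2)) ≤ √M / 2 := by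
  unfold SD
  simp only [← mul_sub, abs_mul, abs_of_pos (by positivity : (0 : ℝ) < 1 / 2 ^ r * (1 / 2 ^ n)),
    ← mul_sum, Fintype.sum_prod_type, sum_abs_sum_ite_ip_sub_half hY1]
  have hsum := sum_abs_bias_le hY0 hY1 hM
  rw [sum_const, card_univ, Fintype.card_fun, ZMod.card, Fintype.card_fin, nsmul_eq_mul]
  push_cast
  field_simp
  exact hsum

end AppendInnerProduct

section Conditioning

variable {A B : Type*} [Fintype A] {p : A × B → ℝ}

noncomputable def condOn (p : A × B → ℝ) (b : B) : A → ℝ := fun a => p (a, b) / margZ p b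

lemma sum_margZ [Fintype B] (p : A × B → ℝ) : ∑ b, margZ p b = ∑ a, ∑ b, p (a, b) :=
  sum_comm

lemma margZ_nonneg (hp0 : ∀ w, 0 ≤ p w) (b : B) : 0 ≤ margZ p b :=
  sum_nonneg fun a _ => hp0 (a, b)

lemma condOn_nonneg (hp0 : ∀ w, 0 ≤ p w) (b : B) (a : A) : 0 ≤ condOn p b a :=
  div_nonneg (hp0 _) (margZ_nonneg hp0 b)

lemma sum_condOn {b : B} (hb : margZ p b ≠ 0) : ∑ a, condOn p b a = 1 := by
  unfold condOn
  rw [← sum_div]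
  exact div_self hb

lemma condOn_le_div [Fintype B] (hp0 : ∀ w, 0 ≤ p w) {a : A} {b : B} {c T : ℝ}
    (ha : ∑ b', p (a, b') ≤ c) (hT : 0 < T) (hb : T ≤ margZ p b) : condOn p b a ≤ c / T := by
  have hab : p (a, b) ≤ c := ha.trans' (single_le_sum (fun b' _ => hp0 (a, b')) (mem_univ b))
  exact div_le_div₀ ((hp0 _).trans hab) hab hT hb

end Conditioning

theorem masked_bit_hidden_general
    (α n r : ℕ) (η : ℝ)
    (samp : (Fin r → ZMod 2) → {S : Finset (Fin α) // S.card = n})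
    (hsamp : ∀ X : (Fin α → ZMod 2) → ℝ, (∀ x, 0 ≤ X x) → (∑ x, X x = 1) →
      (α : ℝ) / 4 ≤ minEntropy X →
      ∃ Y : (Fin n → ZMod 2) → ℝ, (∀ y, 0 ≤ Y y) ∧ (∑ y, Y y = 1) ∧
        (n : ℝ) / 5 ≤ minEntropy Y ∧
        SD (fun uy : (Fin r → ZMod 2) × (Fin n → ZMod 2) =>
              (1 / 2 ^ r) *
                ∑ x, if restrict x (samp uy.1).1 (samp uy.1).2 = uy.2 then X x else 0)
          (fun uy => (1 / 2 ^ r) * Y uy.2) ≤ η)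
    (B : Type*) [Fintype B]
    (p : (Fin α → ZMod 2) × B → ℝ)
    (hp0 : ∀ w, 0 ≤ p w)
    (hsunif : ∀ s0 : Fin α → ZMod 2, ∑ b, p (s0, b) = 1 / 2 ^ α)
    (hsupp : (((Finset.univ : Finset B).filter (fun b => margZ p b ≠ 0)).card : ℝ) ≤
      (2 : ℝ) ^ ((α : ℝ) / 2)) :
    1 - (2 : ℝ) ^ (-(α : ℝ) / 4) ≤
      ∑ z ∈ (Finset.univ : Finset B).filter (fun z =>
          SD (fun uvb : (Fin r → ZMod 2) × (Fin n → ZMod 2) × ZMod 2 =>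
                (1 / 2 ^ r) * (1 / 2 ^ n) *
                  ∑ s0 : Fin α → ZMod 2,
                    (p (s0, z) / margZ p z) *
                      (if ip uvb.2.1 (restrict s0 (samp uvb.1).1 (samp uvb.1).2) = uvb.2.2
                        then 1 else 0))
              (fun _ => (1 / 2 ^ r) * (1 / 2 ^ n) * (1 / 2)) ≤
            η + (2 : ℝ) ^ (-(n : ℝ) / 10)),
        margZ p z := by
  set T : ℝ := 2 ^ (-(3 * α / 4 : ℝ))
  have hT : 0 < T := by positivity
  have hmass : ∑ z, margZ p z = 1 := by
    rw [sum_margZ]; simp [hsunif]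
  have hheavy := one_sub_mul_le_sum_filter_le (margZ p) hmass hT.le hsupp
  rw [← Real.rpow_add two_pos, show (α : ℝ) / 2 + -(3 * α / 4) = -α / 4 by ring] at hheavy
  refine hheavy.trans (sum_le_sum_of_subset_of_nonneg (monotone_filter_right _ fun z _ hz => ?_)
    fun z _ _ => margZ_nonneg hp0 z)
  have hz0 : margZ p z ≠ 0 := (hT.trans_le hz).ne'
  have hkey : (α : ℝ) / 4 ≤ minEntropy (condOn p z) := by
    refine (minEntropy_le_iff (sum_condOn hz0)).2 fun s => ?_
    refine (condOn_le_div hp0 (hsunif s).le hT hz).trans_eq ?_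
    rw [one_div, ← Real.rpow_natCast, ← Real.rpow_neg zero_le_two, ← Real.rpow_sub two_pos]
    ring_nf
  obtain ⟨Y, hY0, hY1, hYent, hYSD⟩ :=
    hsamp (condOn p z) (condOn_nonneg hp0 z) (sum_condOn hz0) hkey
  have hsqrt : √((2 : ℝ) ^ (-((n : ℝ) / 5))) = 2 ^ (-(n : ℝ) / 10) := by
    rw [Real.sqrt_eq_rpow, ← Real.rpow_mul zero_le_two]
    ring_nf
  have hdata := (SD_append_ip_le (1 / 2 ^ r) (condOn p z) Y
    fun u x => restrict x (samp u).1 (samp u).2).trans hYSD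
  have hextract := SD_ip_uniform_le (r := r) hY0 hY1 ((minEntropy_le_iff hY1).1 hYent)
  rw [hsqrt] at hextract
  refine (SD_triangle _ _ _).trans ((add_le_add hdata hextract).trans ?_)
  linarith [Real.rpow_nonneg zero_le_two (-(n : ℝ) / 10)]

/-- **The masked bit is hidden from any small model, with subsampled key.**
`s` is a uniform `α`-bit key; the model `Z` (arbitrary, jointly distributed with `s`) has
support of size at most `2^(α/2)`; `u` and `v` are fresh uniform strings.  Under the
stated sampler property of `samp`, with probability at least `1 - 2^(-α/4)` over `z ← Z`,
the conditional distribution of `(u, v, ⟨v, s|_{samp(u)}⟩)` given `Z = z` is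
`(η + 2^(-n/10))`-close to `(u, v, U)` with `U` a uniform independent bit. -/
theorem masked_bit_hidden
    (α n r : ℕ) (η : ℝ) (hη : 0 ≤ η)
    (samp : (Fin r → ZMod 2) → {S : Finset (Fin α) // S.card = n})
    (hsamp : ∀ X : (Fin α → ZMod 2) → ℝ, (∀ x, 0 ≤ X x) → (∑ x, X x = 1) →
      (α : ℝ) / 4 ≤ minEntropy X →
      ∃ Y : (Fin n → ZMod 2) → ℝ, (∀ y, 0 ≤ Y y) ∧ (∑ y, Y y = 1) ∧
        (n : ℝ) / 5 ≤ minEntropy Y ∧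
        SD (fun uy : (Fin r → ZMod 2) × (Fin n → ZMod 2) =>
              (1 / 2 ^ r) *
                ∑ x, if restrict x (samp uy.1).1 (samp uy.1).2 = uy.2 then X x else 0)
          (fun uy => (1 / 2 ^ r) * Y uy.2) ≤ η)
    (B : Type*) [Fintype B]
    (p : (Fin α → ZMod 2) × B → ℝ)
    (hp0 : ∀ w, 0 ≤ p w) (hp1 : ∑ w, p w = 1)
    (hsunif : ∀ s0 : Fin α → ZMod 2, ∑ b, p (s0, b) = 1 / 2 ^ α)
    (hsupp : (((Finset.univ : Finset B).filter (fun b => margZ p b ≠ 0)).card : ℝ) ≤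
      (2 : ℝ) ^ ((α : ℝ) / 2)) :
    1 - (2 : ℝ) ^ (-(α : ℝ) / 4) ≤
      ∑ z ∈ (Finset.univ : Finset B).filter (fun z =>
          SD (fun uvb : (Fin r → ZMod 2) × (Fin n → ZMod 2) × ZMod 2 =>
                (1 / 2 ^ r) * (1 / 2 ^ n) *
                  ∑ s0 : Fin α → ZMod 2,
                    (p (s0, z) / margZ p z) *
                      (if ip uvb.2.1 (restrict s0 (samp uvb.1).1 (samp uvb.1).2) = uvb.2.2
                        then 1 else 0))
              (fun _ => (1 / 2 ^ r) * (1 / 2 ^ n) * (1 / 2)) ≤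
            η + (2 : ℝ) ^ (-(n : ℝ) / 10)),
        margZ p z :=
  masked_bit_hidden_general α n r η samp hsamp B p hp0 hsunif hsupp
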